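/- If a finite set B of atoms supports x (i.e., every finitely-supported permutation of atoms fixing B pointwise also fixes x), and B' is another finite set supporting x, then the intersection B ∩ B' also supports x. -/

import Mathlib

/-- Atoms: a countably infinite set. -/
abbrev Atom := ℕ

/-- The subgroup of permutations of atoms with finite domain. -/
def finPermSubgroup : Subgroup (Equiv.Perm Atom) where
  carrier := {π | {a | π a ≠ a}.Finite}
  one_mem' := by simp
  mul_mem' := by
    intro π σ hπ hσ
    refine (hπ.union hσ).subset ?_
    intro a ha
    by_contra h
    simp only [Set.mem_union, Set.mem_setOf_eq, not_or, not_not, ne_eq] at h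
    apply ha
    show π (σ a) = a
    rw [h.2, h.1]
  inv_mem' := by
    intro π hπ
    refine hπ.subset ?_
    intro a ha h
    apply ha
    show π⁻¹ a = a
    conv_lhs => rw [← h]
    simp

/-- Finite-domain permutations of atoms. -/
abbrev FinPerm := ↥finPermSubgroup

/-- The transposition of two atoms, as a finite-domain permutation. -/
def fswap (a b : Atom) : FinPerm :=
  ⟨Equiv.swap a b, (Set.finite_singleton a |>.insert b).subset (by
    intro x hx
    simp only [Set.mem_setOf_eq] at hx
    by_contra h
    simp only [Set.mem_insert_iff, Set.mem_singleton_iff, not_or] at h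
    exact hx (Equiv.swap_apply_of_ne_of_ne h.2 h.1))⟩

/-- The domain of a finite-domain permutation. -/
def pdom (π : FinPerm) : Set Atom := {a | π.val a ≠ a}

section
variable {X : Type*} [MulAction FinPerm X]

/-- B supports x. -/
def Supports (B : Set Atom) (x : X) : Prop :=
  ∀ π : FinPerm, (∀ a ∈ B, π.val a = a) → π • x = x

/-- B strongly supports x. -/
def StronglySupports (B : Set Atom) (x : X) : Prop :=
  ∀ π : FinPerm, π • x = x ↔ (∀ a ∈ B, π.val a = a)

/-- The (least) support of x: intersection of all finite supporting sets. -/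
def supp (x : X) : Set Atom :=
  ⋂₀ {B : Set Atom | B.Finite ∧ Supports B x}

/-- A Perm(𝔸)-set is nominal when every element has a finite support. -/
def Nominal (X : Type*) [MulAction FinPerm X] : Prop :=
  ∀ x : X, ∃ B : Set Atom, B.Finite ∧ Supports B x

/-- A Perm(𝔸)-set is a strong nominal set when every element is strongly
supported by a finite set. -/
def StrongNominal (X : Type*) [MulAction FinPerm X] : Prop :=
  ∀ x : X, ∃ B : Set Atom, B.Finite ∧ StronglySupports B x

end

theorem smul_eq_of_conj_smul_eq {G α : Type*} [Group G] [MulAction G α] {g h : G} {x : α}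
    (hg : g • x = x) (hconj : (g * h * g⁻¹) • x = x) : h • x = x := by
  have hg' : g⁻¹ • x = x := inv_smul_eq_iff.mpr hg.symm
  calc h • x = g⁻¹ • (g * h * g⁻¹) • x := by simp only [mul_smul, inv_smul_smul, hg']
    _ = x := by rw [hconj, hg']

section
variable {X : Type*} [MulAction FinPerm X] {x : X} {B B' : Set Atom}

/-- Conjugating by the swap of `b` with a fresh atom `c`, which fixes `x` because it fixes `B`,
turns a permutation fixing `B' \ {b}` into one fixing `B'`. -/
theorem Supports.sdiff_singleton (hsB' : Supports B' x) (hB' : B'.Finite)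
    (hsB : Supports B x) (hB : B.Finite) {b : Atom} (hb : b ∉ B) :
    Supports (B' \ {b}) x := by
  intro π hπ
  obtain ⟨c, hc⟩ := ((hB.union hB').union π.2).exists_notMem
  simp only [Set.mem_union, Set.mem_ofPred_eq, not_or, not_not] at hc
  obtain ⟨⟨hcB, hcB'⟩, hπc⟩ := hc
  have hswap : fswap b c • x = x := hsB _ fun a ha =>
    Equiv.swap_apply_of_ne_of_ne (ne_of_mem_of_not_mem ha hb) (ne_of_mem_of_not_mem ha hcB)
  refine smul_eq_of_conj_smul_eq hswap (hsB' _ fun a ha => ?_)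
  show Equiv.swap b c (π.val (Equiv.swap b c a)) = a
  by_cases hab : a = b
  · rw [hab, Equiv.swap_apply_left, hπc, Equiv.swap_apply_right]
  · have hac : a ≠ c := ne_of_mem_of_not_mem ha hcB'
    rw [Equiv.swap_apply_of_ne_of_ne hab hac, hπ a ⟨ha, hab⟩,
      Equiv.swap_apply_of_ne_of_ne hab hac]

theorem Supports.sdiff (hsB' : Supports B' x) (hB' : B'.Finite)
    (hsB : Supports B x) (hB : B.Finite) {D : Set Atom} (hD : D.Finite)
    (hDB : Disjoint D B) : Supports (B' \ D) x := by
  induction D, hD using Set.Finite.induction_on with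
  | empty => simpa using hsB'
  | @insert b D _ _ ih =>
    rw [Set.insert_eq, Set.union_comm, ← Set.sdiff_sdiff]
    have hDB' := Set.disjoint_insert_left.mp hDB
    exact (ih hDB'.2).sdiff_singleton hB'.sdiff hsB hB hDB'.1

end

theorem stmt0 {X : Type*} [MulAction FinPerm X] (x : X) (B B' : Set Atom)
    (hB : B.Finite) (hB' : B'.Finite)
    (hsB : Supports B x) (hsB' : Supports B' x) :
    Supports (B ∩ B') x := by
  rw [Set.inter_comm, ← Set.sdiff_sdiff_right_self]
  exact hsB'.sdiff hB' hsB hB hB'.sdiff Set.disjoint_sdiff_left
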